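/- arXiv:1506.05288 — 6 statements merged into one kernel-verified Lean document; each statement's English description precedes it below -/
import Mathlib

section
/- For all real h with |h| ≤ 2 (or at least for |h| < 2), (arcsin(h/2))² = (1/2) ∑_{k=1}^∞ ((k-1)!)²/(2k)! · h^{2k}. -/
/-!
Put `g x = arcsin x / √(1 - x²)`, so that `(arcsin²)' = 2 g` and `(1 - x²) g' - x g = 1`. The odd
series `∑ bₖ x^(2k+1)` with `bₖ = 4ᵏ (k!)² / (2k+1)!` satisfies the same equation, because
`(2k+3) bₖ₊₁ = (2k+2) bₖ`; hence `√(1 - x²) · ∑ bₖ x^(2k+1)` and `arcsin` have equal derivatives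
on `(-1, 1)` and agree at `0`, and one more integration gives `arcsin² x = ∑ bₖ/(k+1) x^(2k+2)`
there. Since `bₖ - bₖ₊₁ = bₖ/(2k+3) ≥ bₖ/(3(k+1))`, the coefficients `bₖ/(k+1)` have a telescoping
majorant, so the series converges uniformly on `[-1, 1]` and the identity extends to the endpoints.
-/

open Real Set

section LacunaryPowerSeries

variable {c : ℕ → ℝ} {m : ℕ → ℕ} {C : ℝ}

lemma summable_natCast_mul_pow_sub_one {r : ℝ} (hr0 : 0 ≤ r) (hr1 : r < 1) :
    Summable fun n : ℕ => (n : ℝ) * r ^ (n - 1) := by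
  rw [← summable_nat_add_iff 1]
  have hr : ‖r‖ < 1 := by rwa [norm_of_nonneg hr0]
  refine ((summable_pow_mul_geometric_of_norm_lt_one 1 hr).add
    (summable_geometric_of_lt_one hr0 hr1)).congr fun n => ?_
  simp only [pow_one, Nat.cast_add, Nat.cast_one, Nat.add_sub_cancel]
  ring

lemma summable_mul_pow_of_injective (hm : m.Injective) (hc : ∀ k, |c k| ≤ C) {x : ℝ}
    (hx : |x| < 1) : Summable fun k => c k * x ^ m k := by
  refine .of_norm_bounded
    (((summable_geometric_of_lt_one (abs_nonneg x) hx).comp_injective hm).mul_left C) fun k => ?_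
  rw [norm_mul, norm_pow, Real.norm_eq_abs, Real.norm_eq_abs]
  exact mul_le_mul_of_nonneg_right (hc k) (by positivity)

lemma norm_mul_natCast_mul_pow_sub_one_le (hc : ∀ k, |c k| ≤ C) {y r : ℝ} (hy : |y| ≤ r)
    (k : ℕ) : ‖c k * m k * y ^ (m k - 1)‖ ≤ C * (m k * r ^ (m k - 1)) := by
  rw [norm_mul, norm_mul, norm_pow, Real.norm_natCast, Real.norm_eq_abs, Real.norm_eq_abs,
    mul_assoc]
  gcongr
  · exact (abs_nonneg _).trans (hc k)
  · exact hc k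

lemma summable_mul_natCast_mul_pow_sub_one (hm : m.Injective) (hc : ∀ k, |c k| ≤ C) {x : ℝ}
    (hx : |x| < 1) : Summable fun k => c k * m k * x ^ (m k - 1) :=
  .of_norm_bounded (((summable_natCast_mul_pow_sub_one (abs_nonneg x) hx).comp_injective
    hm).mul_left C) (norm_mul_natCast_mul_pow_sub_one_le hc le_rfl)

lemma hasDerivAt_tsum_mul_pow (hm : m.Injective) (hc : ∀ k, |c k| ≤ C) {x : ℝ}
    (hx : |x| < 1) :
    HasDerivAt (fun y => ∑' k, c k * y ^ m k) (∑' k, c k * m k * x ^ (m k - 1)) x := by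
  obtain ⟨r, hxr, hr1⟩ := exists_between hx
  have hx_mem : x ∈ Ioo (-r) r := abs_lt.1 hxr
  refine hasDerivAt_tsum_of_isPreconnected
    (((summable_natCast_mul_pow_sub_one ((abs_nonneg x).trans hxr.le) hr1).comp_injective
      hm).mul_left C) isOpen_Ioo isPreconnected_Ioo (fun k y _ => ?_)
    (fun k y hy => norm_mul_natCast_mul_pow_sub_one_le hc (abs_le.2 ⟨hy.1.le, hy.2.le⟩) k)
    hx_mem (summable_mul_pow_of_injective hm hc hx) hx_mem
  simpa only [mul_assoc] using (hasDerivAt_pow (m k) y).const_mul (c k)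

lemma continuousOn_tsum_mul_pow (hc : Summable fun k => |c k|) :
    ContinuousOn (fun y => ∑' k, c k * y ^ m k) (Icc (-1) 1) := by
  refine continuousOn_tsum (fun k => (continuous_const.mul (continuous_pow _)).continuousOn) hc
    fun k y hy => ?_
  rw [norm_mul, norm_pow, Real.norm_eq_abs, Real.norm_eq_abs]
  exact mul_le_of_le_one_right (abs_nonneg _) (pow_le_one₀ (abs_nonneg y) (abs_le.2 hy))

end LacunaryPowerSeries

lemma eqOn_of_hasDerivAt {s : Set ℝ} (hs : IsOpen s) (hs' : IsPreconnected s) {f g f' : ℝ → ℝ}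
    (hf : ∀ y ∈ s, HasDerivAt f (f' y) y) (hg : ∀ y ∈ s, HasDerivAt g (f' y) y) {a : ℝ}
    (ha : a ∈ s) (hfg : f a = g a) : EqOn f g s :=
  hs.eqOn_of_deriv_eq hs' (fun y hy => (hf y hy).differentiableAt.differentiableWithinAt)
    (fun y hy => (hg y hy).differentiableAt.differentiableWithinAt)
    (fun y hy => (hf y hy).deriv.trans (hg y hy).deriv.symm) ha hfg

open scoped Nat

noncomputable def arcsinDivSqrtCoeff (k : ℕ) : ℝ := 4 ^ k * (k ! : ℝ) ^ 2 / (2 * k + 1)!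

lemma arcsinDivSqrtCoeff_zero : arcsinDivSqrtCoeff 0 = 1 := by
  simp [arcsinDivSqrtCoeff]

lemma arcsinDivSqrtCoeff_pos (k : ℕ) : 0 < arcsinDivSqrtCoeff k := by
  unfold arcsinDivSqrtCoeff
  positivity

lemma arcsinDivSqrtCoeff_succ_mul (k : ℕ) :
    arcsinDivSqrtCoeff (k + 1) * (2 * k + 3) = arcsinDivSqrtCoeff k * (2 * k + 2) := by
  have h : (2 * (k + 1) + 1)! = (2 * k + 3) * ((2 * k + 2) * (2 * k + 1)!) := by
    rw [show 2 * (k + 1) + 1 = 2 * k + 1 + 1 + 1 by ring, Nat.factorial_succ, Nat.factorial_succ]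
  simp only [arcsinDivSqrtCoeff, h, Nat.factorial_succ]
  push_cast
  field_simp
  ring

lemma arcsinDivSqrtCoeff_sub_succ (k : ℕ) :
    arcsinDivSqrtCoeff k - arcsinDivSqrtCoeff (k + 1) = arcsinDivSqrtCoeff k / (2 * k + 3) := by
  rw [eq_div_iff (by positivity)]
  linear_combination -arcsinDivSqrtCoeff_succ_mul k

lemma arcsinDivSqrtCoeff_antitone : Antitone arcsinDivSqrtCoeff :=
  antitone_nat_of_succ_le fun k => sub_nonneg.1 <| by
    rw [arcsinDivSqrtCoeff_sub_succ]
    exact (div_pos (arcsinDivSqrtCoeff_pos k) (by positivity)).le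

lemma abs_arcsinDivSqrtCoeff_le_one (k : ℕ) : |arcsinDivSqrtCoeff k| ≤ 1 := by
  rw [abs_of_pos (arcsinDivSqrtCoeff_pos k), ← arcsinDivSqrtCoeff_zero]
  exact arcsinDivSqrtCoeff_antitone k.zero_le

lemma abs_arcsinDivSqrtCoeff_div_le_one (k : ℕ) : |arcsinDivSqrtCoeff k / (k + 1)| ≤ 1 := by
  rw [abs_div, abs_of_pos (by positivity : (0 : ℝ) < k + 1), div_le_one (by positivity)]
  linarith [abs_arcsinDivSqrtCoeff_le_one k, (k.cast_nonneg : (0 : ℝ) ≤ k)]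

lemma summable_arcsinDivSqrtCoeff_div : Summable fun k : ℕ => arcsinDivSqrtCoeff k / (k + 1) := by
  refine summable_of_sum_range_le (c := 3) (fun k => (div_pos (arcsinDivSqrtCoeff_pos k)
    (by positivity)).le) fun n => ?_
  calc ∑ k ∈ Finset.range n, arcsinDivSqrtCoeff k / (k + 1)
      ≤ ∑ k ∈ Finset.range n, 3 * (arcsinDivSqrtCoeff k - arcsinDivSqrtCoeff (k + 1)) := by
        refine Finset.sum_le_sum fun k _ => ?_
        rw [arcsinDivSqrtCoeff_sub_succ, mul_div_assoc', div_le_div_iff₀ (by positivity)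
          (by positivity)]
        nlinarith [arcsinDivSqrtCoeff_pos k]
    _ = 3 * (1 - arcsinDivSqrtCoeff n) := by
        rw [← Finset.mul_sum, Finset.sum_range_sub', arcsinDivSqrtCoeff_zero]
    _ ≤ 3 := by linarith [arcsinDivSqrtCoeff_pos n]

noncomputable def arcsinDivSqrtSeries (x : ℝ) : ℝ :=
  ∑' k : ℕ, arcsinDivSqrtCoeff k * x ^ (2 * k + 1)

noncomputable def arcsinSqSeries (x : ℝ) : ℝ :=
  ∑' k : ℕ, arcsinDivSqrtCoeff k / (k + 1) * x ^ (2 * k + 2)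

lemma hasDerivAt_arcsinDivSqrtSeries {x : ℝ} (hx : |x| < 1) :
    HasDerivAt arcsinDivSqrtSeries ((1 + x * arcsinDivSqrtSeries x) / (1 - x ^ 2)) x := by
  have hm : (fun k : ℕ => 2 * k + 1).Injective := fun a b h => by simp_all
  have hderiv := hasDerivAt_tsum_mul_pow hm abs_arcsinDivSqrtCoeff_le_one hx
  set D := ∑' k : ℕ, arcsinDivSqrtCoeff k * ((2 * k + 1 : ℕ) : ℝ) * x ^ (2 * k + 1 - 1)
  have hD : HasSum (fun k : ℕ => arcsinDivSqrtCoeff k * ((2 * k + 1 : ℕ) : ℝ) * x ^ (2 * k)) D :=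
    (summable_mul_natCast_mul_pow_sub_one hm abs_arcsinDivSqrtCoeff_le_one hx).hasSum
  have hg : HasSum (fun k : ℕ => arcsinDivSqrtCoeff k * x ^ (2 * k + 1)) (arcsinDivSqrtSeries x) :=
    (summable_mul_pow_of_injective hm abs_arcsinDivSqrtCoeff_le_one hx).hasSum
  have hshift : HasSum (fun k : ℕ => arcsinDivSqrtCoeff k * (2 * k + 2) * x ^ (2 * k + 2))
      (D - 1) := by
    have h := (hasSum_nat_add_iff' 1).2 hD
    simp only [Nat.cast_add, Nat.cast_mul, Nat.cast_ofNat, Nat.cast_one, Finset.range_one,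
      Finset.sum_singleton, arcsinDivSqrtCoeff_zero, CharP.cast_eq_zero, mul_zero, zero_add,
      mul_one, pow_zero] at h
    refine h.congr_fun fun k => ?_
    linear_combination -x ^ (2 * k + 2) * arcsinDivSqrtCoeff_succ_mul k
  have hcomb : HasSum (fun k : ℕ => arcsinDivSqrtCoeff k * (2 * k + 2) * x ^ (2 * k + 2))
      (x ^ 2 * D + x * arcsinDivSqrtSeries x) :=
    ((hD.mul_left (x ^ 2)).add (hg.mul_left x)).congr_fun fun k => by push_cast; ring
  refine hderiv.congr_deriv ?_
  rw [eq_div_iff (by nlinarith [abs_lt.1 hx])]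
  linear_combination hshift.unique hcomb

lemma sqrt_one_sub_sq_mul_arcsinDivSqrtSeries {x : ℝ} (hx : x ∈ Ioo (-1) 1) :
    √(1 - x ^ 2) * arcsinDivSqrtSeries x = arcsin x := by
  refine eqOn_of_hasDerivAt (f := fun y => √(1 - y ^ 2) * arcsinDivSqrtSeries y) isOpen_Ioo
    isPreconnected_Ioo (fun y hy => ?_)
    (fun y hy => hasDerivAt_arcsin hy.1.ne' hy.2.ne) (by norm_num : (0 : ℝ) ∈ Ioo (-1) 1)
    (by simp [arcsinDivSqrtSeries]) hx
  have hy2 : 0 < 1 - y ^ 2 := by nlinarith [hy.1, hy.2]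
  have hs : HasDerivAt (fun z => √(1 - z ^ 2)) (-(2 * y) / (2 * √(1 - y ^ 2))) y :=
    (((hasDerivAt_pow 2 y).const_sub 1).congr_deriv (by ring)).sqrt hy2.ne'
  refine (hs.mul (hasDerivAt_arcsinDivSqrtSeries (abs_lt.2 hy))).congr_deriv ?_
  have hsq := sq_sqrt hy2.le
  have hpos := sqrt_pos.2 hy2
  field_simp
  linear_combination (1 + y * arcsinDivSqrtSeries y) * hsq

lemma hasDerivAt_arcsinSqSeries {x : ℝ} (hx : x ∈ Ioo (-1) 1) :
    HasDerivAt arcsinSqSeries (2 * arcsin x / √(1 - x ^ 2)) x := by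
  have hm : (fun k : ℕ => 2 * k + 2).Injective := fun a b h => by simp_all
  refine (hasDerivAt_tsum_mul_pow hm abs_arcsinDivSqrtCoeff_div_le_one
    (abs_lt.2 hx)).congr_deriv ?_
  have hpos : 0 < √(1 - x ^ 2) := sqrt_pos.2 (by nlinarith [hx.1, hx.2])
  rw [← sqrt_one_sub_sq_mul_arcsinDivSqrtSeries hx, mul_div_assoc,
    mul_div_cancel_left₀ _ hpos.ne', arcsinDivSqrtSeries, ← tsum_mul_left]
  refine tsum_congr fun k => ?_
  rw [show 2 * k + 2 - 1 = 2 * k + 1 by omega]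
  push_cast
  field_simp

lemma arcsinSqSeries_eq {x : ℝ} (hx : x ∈ Icc (-1) 1) : arcsinSqSeries x = arcsin x ^ 2 := by
  refine EqOn.of_subset_closure (fun y hy => ?_) (continuousOn_tsum_mul_pow ?_)
    (continuous_arcsin.pow 2).continuousOn Ioo_subset_Icc_self
    (closure_Ioo (by norm_num)).ge hx
  · exact eqOn_of_hasDerivAt isOpen_Ioo isPreconnected_Ioo
      (fun z hz => hasDerivAt_arcsinSqSeries hz)
      (fun z hz => ((hasDerivAt_arcsin hz.1.ne' hz.2.ne).pow 2).congr_deriv (by ring))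
      (by norm_num : (0 : ℝ) ∈ Ioo (-1) 1) (by simp [arcsinSqSeries]) hy
  · simpa only [abs_of_pos (div_pos (arcsinDivSqrtCoeff_pos _) (Nat.cast_add_one_pos _))]
      using summable_arcsinDivSqrtCoeff_div

theorem arcsin_sq_series (h : ℝ) (hh : |h| ≤ 2) :
    (Real.arcsin (h / 2)) ^ 2 =
      (1 / 2) * ∑' k : ℕ+, ((Nat.factorial ((k : ℕ) - 1) : ℝ) ^ 2 /
        (Nat.factorial (2 * (k : ℕ)) : ℝ)) * h ^ (2 * (k : ℕ)) := by
  have hx : h / 2 ∈ Icc (-1) 1 := by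
    rw [mem_Icc, ← abs_le, abs_div, abs_two]
    linarith
  rw [← arcsinSqSeries_eq hx, arcsinSqSeries, ← Equiv.pnatEquivNat.symm.tsum_eq, ← tsum_mul_left]
  refine tsum_congr fun k => ?_
  simp only [Equiv.pnatEquivNat_symm_apply, Nat.succPNat_coe, Nat.succ_sub_one,
    Nat.succ_eq_add_one, arcsinDivSqrtCoeff, show 2 * (k + 1) = 2 * k + 1 + 1 by ring,
    Nat.factorial_succ, div_pow]
  push_cast
  rw [show (4 : ℝ) ^ k = 2 ^ (2 * k) by rw [pow_mul]; norm_num]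
  field_simp
  ring
end

section
/- ∑_{k=1}^∞ ((k-1)!)²/(2k)! = π²/18. -/
/-!
The beta integral `∫₀¹ xⁿ (1 - x)ⁿ⁺¹ dx = n! (n + 1)! / (2n + 2)!` turns the series into
`∫₀¹ -log (1 - x (1 - x)) / x dx`, by summing the logarithmic series under the integral sign.
The factorisation `(1 - x + x²)(1 - x²)(1 - x³) = (1 - x)(1 - x⁶)` splits this into integrals
`∫₀¹ -log (1 - xᵐ) / x dx = ζ(2) / m`, and `ζ(2) (1 + 1/6 - 1/2 - 1/3) = π² / 18`.
-/

open Real MeasureTheory Set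
open scoped Nat

theorem hasSum_integral_of_hasSum_of_nonneg {α : Type*} [MeasurableSpace α] {μ : Measure α}
    {f : ℕ → α → ℝ} {F : α → ℝ} (hf : ∀ n, Integrable (f n) μ) (hf₀ : ∀ n, 0 ≤ᵐ[μ] f n)
    (hF : ∀ᵐ x ∂μ, HasSum (f · x) (F x)) (hs : Summable fun n ↦ ∫ x, f n x ∂μ) :
    HasSum (fun n ↦ ∫ x, f n x ∂μ) (∫ x, F x ∂μ) := by
  have h_norm : ∀ n, ∫ x, ‖f n x‖ ∂μ = ∫ x, f n x ∂μ := fun n ↦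
    integral_congr_ae <| (hf₀ n).mono fun x hx ↦ Real.norm_of_nonneg hx
  have h := hasSum_integral_of_summable_integral_norm hf (by simpa only [h_norm] using hs)
  rwa [integral_congr_ae (hF.mono fun x hx ↦ hx.tsum_eq)] at h

theorem hasSum_setIntegral_Ioo_neg_log_one_sub_div {p : ℝ → ℝ} {f : ℕ → ℝ → ℝ}
    (hp : MapsTo p (Ioo 0 1) (Ico 0 1)) (hf : ∀ n, Continuous (f n))
    (hfp : ∀ n, ∀ x ∈ Ioo (0 : ℝ) 1, f n x = p x ^ (n + 1) / (n + 1) / x)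
    (hs : Summable fun n ↦ ∫ x in Ioo (0 : ℝ) 1, f n x) :
    HasSum (fun n ↦ ∫ x in Ioo (0 : ℝ) 1, f n x) (∫ x in Ioo (0 : ℝ) 1, -log (1 - p x) / x) := by
  refine hasSum_integral_of_hasSum_of_nonneg
    (fun n ↦ (hf n).integrableOn_Icc.mono_set Ioo_subset_Icc_self)
    (fun n ↦ ae_restrict_of_forall_mem measurableSet_Ioo fun x hx ↦ ?_)
    (ae_restrict_of_forall_mem measurableSet_Ioo fun x hx ↦ ?_) hs
  · have := (hp hx).1
    rw [Pi.zero_apply, hfp n x hx]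
    exact div_nonneg (by positivity) hx.1.le
  · have hpx : |p x| < 1 := abs_lt.2 ⟨by linarith [(hp hx).1], (hp hx).2⟩
    exact ((hasSum_pow_div_log_of_abs_lt_one hpx).div_const x).congr_fun fun n ↦ hfp n x hx

theorem integral_pow_mul_one_sub_pow (a b : ℕ) :
    ∫ x in (0 : ℝ)..1, x ^ a * (1 - x) ^ b = (a ! * b ! / (a + b + 1)! : ℝ) := by
  have hB := Complex.betaIntegral_eq_Gamma_mul_div (a + 1) (b + 1)
    (by simp only [Complex.add_re, Complex.natCast_re, Complex.one_re]; positivity)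
    (by simp only [Complex.add_re, Complex.natCast_re, Complex.one_re]; positivity)
  rw [show (a + 1 + (b + 1) : ℂ) = ((a + b + 1 : ℕ) : ℂ) + 1 by push_cast; ring,
    Complex.Gamma_nat_eq_factorial, Complex.Gamma_nat_eq_factorial,
    Complex.Gamma_nat_eq_factorial, Complex.betaIntegral] at hB
  simp only [add_sub_cancel_right, Complex.cpow_natCast] at hB
  apply Complex.ofReal_injective
  rw [← intervalIntegral.integral_ofReal]
  push_cast
  exact hB

theorem setIntegral_Ioo_pow_mul_one_sub_pow_div (n : ℕ) :
    ∫ x in Ioo (0 : ℝ) 1, x ^ n * (1 - x) ^ (n + 1) / (n + 1) = (n ! : ℝ) ^ 2 / (2 * (n + 1))! := by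
  rw [← integral_Ioc_eq_integral_Ioo, ← intervalIntegral.integral_of_le zero_le_one,
    intervalIntegral.integral_div, integral_pow_mul_one_sub_pow,
    show n + (n + 1) + 1 = 2 * (n + 1) by ring, Nat.factorial_succ]
  push_cast
  field_simp

theorem setIntegral_Ioo_pow_mul_sub_one_div {m : ℕ} (hm : 0 < m) (n : ℕ) :
    ∫ x in Ioo (0 : ℝ) 1, x ^ (m * (n + 1) - 1) / (n + 1) = 1 / ((n : ℝ) + 1) ^ 2 / m := by
  rw [← integral_Ioc_eq_integral_Ioo, ← intervalIntegral.integral_of_le zero_le_one,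
    intervalIntegral.integral_div, integral_pow, Nat.cast_sub (Nat.mul_pos hm n.succ_pos)]
  push_cast
  field_simp
  ring

theorem hasSum_one_div_add_one_sq : HasSum (fun n : ℕ ↦ 1 / ((n : ℝ) + 1) ^ 2) (π ^ 2 / 6) := by
  simpa using (hasSum_nat_add_iff' 1).2 hasSum_zeta_two

theorem factorial_sq_div_factorial_two_mul_le (n : ℕ) :
    (n ! : ℝ) ^ 2 / (2 * (n + 1))! ≤ 1 / ((n : ℝ) + 1) ^ 2 := by
  have h : (n + 1)! * (n + 1)! ≤ (2 * (n + 1))! := Nat.le_of_dvd (Nat.factorial_pos _) <| by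
    simpa [two_mul] using Nat.factorial_mul_factorial_dvd_factorial_add (n + 1) (n + 1)
  rw [div_le_div_iff₀ (by positivity) (by positivity), one_mul]
  calc (n ! : ℝ) ^ 2 * ((n : ℝ) + 1) ^ 2 = ((n + 1)! * (n + 1)! : ℕ) := by
        push_cast [Nat.factorial_succ]; ring
    _ ≤ (2 * (n + 1))! := by exact_mod_cast h

theorem setIntegral_Ioo_neg_log_one_sub_mul_one_sub_div :
    ∫ x in Ioo (0 : ℝ) 1, -log (1 - x * (1 - x)) / x =
      ∑' n : ℕ, (n ! : ℝ) ^ 2 / (2 * (n + 1))! := by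
  have hsum : Summable fun n : ℕ ↦ (n ! : ℝ) ^ 2 / (2 * (n + 1))! :=
    hasSum_one_div_add_one_sq.summable.of_nonneg_of_le (fun n ↦ by positivity)
      factorial_sq_div_factorial_two_mul_le
  have h := hasSum_setIntegral_Ioo_neg_log_one_sub_div (p := fun x ↦ x * (1 - x))
    (f := fun n x ↦ x ^ n * (1 - x) ^ (n + 1) / (n + 1))
    (fun x ⟨hx₀, hx₁⟩ ↦ ⟨by nlinarith, by nlinarith⟩) (fun n ↦ by fun_prop)
    (fun n x hx ↦ by rw [mul_pow, pow_succ x]; field_simp [hx.1.ne'])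
    (by simpa only [setIntegral_Ioo_pow_mul_one_sub_pow_div] using hsum)
  simp only [setIntegral_Ioo_pow_mul_one_sub_pow_div] at h
  exact h.tsum_eq.symm

theorem setIntegral_Ioo_neg_log_one_sub_pow_div {m : ℕ} (hm : 0 < m) :
    ∫ x in Ioo (0 : ℝ) 1, -log (1 - x ^ m) / x = π ^ 2 / 6 / m := by
  have h := hasSum_setIntegral_Ioo_neg_log_one_sub_div (p := (· ^ m))
    (f := fun n x ↦ x ^ (m * (n + 1) - 1) / (n + 1))
    (fun x ⟨hx₀, hx₁⟩ ↦ ⟨by positivity, pow_lt_one₀ hx₀.le hx₁ hm.ne'⟩) (fun n ↦ by fun_prop)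
    (fun n x hx ↦ by
      rw [← pow_mul, ← pow_sub_one_mul (Nat.mul_pos hm n.succ_pos).ne' x]; field_simp [hx.1.ne'])
    (by simpa only [setIntegral_Ioo_pow_mul_sub_one_div hm] using
      (hasSum_one_div_add_one_sq.div_const (m : ℝ)).summable)
  simp only [setIntegral_Ioo_pow_mul_sub_one_div hm] at h
  exact h.unique (hasSum_one_div_add_one_sq.div_const _)

theorem integrableOn_Ioo_neg_log_one_sub_pow_div {m : ℕ} (hm : 0 < m) :
    IntegrableOn (fun x ↦ -log (1 - x ^ m) / x) (Ioo (0 : ℝ) 1) :=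
  Integrable.of_integral_ne_zero <| by
    rw [setIntegral_Ioo_neg_log_one_sub_pow_div hm]; positivity

theorem neg_log_one_sub_mul_one_sub_div {x : ℝ} (hx : x ∈ Ioo (0 : ℝ) 1) :
    -log (1 - x * (1 - x)) / x =
      -log (1 - x ^ 1) / x + -log (1 - x ^ 6) / x - -log (1 - x ^ 2) / x - -log (1 - x ^ 3) / x := by
  obtain ⟨hx₀, hx₁⟩ := hx
  have hpow : ∀ m ≠ 0, 1 - x ^ m ≠ 0 := fun m hm ↦ (sub_pos.2 (pow_lt_one₀ hx₀.le hx₁ hm)).ne'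
  have hquad : 1 - x * (1 - x) ≠ 0 := by nlinarith
  have hlog := congrArg log <| show
    (1 - x * (1 - x)) * (1 - x ^ 2) * (1 - x ^ 3) = (1 - x ^ 1) * (1 - x ^ 6) by ring
  rw [log_mul (mul_ne_zero hquad (hpow 2 two_ne_zero)) (hpow 3 three_ne_zero),
    log_mul hquad (hpow 2 two_ne_zero), log_mul (hpow 1 one_ne_zero) (hpow 6 (by norm_num))] at hlog
  simp only [← add_div, ← sub_div]
  congr 1
  linarith

theorem series_pi_sq_div_18 :
    ∑' k : ℕ+, ((Nat.factorial ((k : ℕ) - 1) : ℝ) ^ 2 /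
      (Nat.factorial (2 * (k : ℕ)) : ℝ)) = Real.pi ^ 2 / 18 := by
  have h₁ := integrableOn_Ioo_neg_log_one_sub_pow_div one_pos
  have h₂ := integrableOn_Ioo_neg_log_one_sub_pow_div two_pos
  have h₃ := integrableOn_Ioo_neg_log_one_sub_pow_div three_pos
  have h₆ := integrableOn_Ioo_neg_log_one_sub_pow_div (m := 6) (by norm_num)
  rw [tsum_pnat_eq_tsum_succ (f := fun k ↦ ((k - 1)! : ℝ) ^ 2 / (2 * k)!)]
  simp only [add_tsub_cancel_right]
  rw [← setIntegral_Ioo_neg_log_one_sub_mul_one_sub_div,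
    setIntegral_congr_fun measurableSet_Ioo fun x hx ↦ neg_log_one_sub_mul_one_sub_div hx,
    integral_sub (by exact (h₁.add h₆).sub h₂) h₃, integral_sub (h₁.fun_add h₆) h₂,
    integral_add h₁ h₆]
  simp only [setIntegral_Ioo_neg_log_one_sub_pow_div, Nat.ofNat_pos, zero_lt_one, Nat.cast_ofNat,
    Nat.cast_one]
  ring
end

section
/- ∑_{k=1}^∞ 1/k² = 3 · ∑_{k=1}^∞ ((k-1)!)²/(2k)!. -/
open Filter Topology
open scoped ENNReal NNReal


noncomputable def Af (m n : ℕ) : ℝ :=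
  (Nat.factorial m : ℝ) * (Nat.factorial n : ℝ) / (Nat.factorial (m+n+2) : ℝ)

lemma Af_nonneg (m n : ℕ) : 0 ≤ Af m n := by unfold Af; positivity

lemma Af_symm (m n : ℕ) : Af m n = Af n m := by
  unfold Af
  have h : m+n+2 = n+m+2 := by omega
  rw [h, mul_comm]

lemma telescope_hasSum {g : ℕ → ℝ} (h0 : ∀ n, 0 ≤ g n - g (n+1))
    (hlim : Tendsto g atTop (𝓝 0)) : HasSum (fun n => g n - g (n+1)) (g 0) := by
  rw [hasSum_iff_tendsto_nat_of_nonneg h0]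
  have h1 : (fun n => ∑ i ∈ Finset.range n, (g i - g (i+1))) = fun n => g 0 - g n := by
    funext n; exact Finset.sum_range_sub' g n
  rw [h1]
  simpa using tendsto_const_nhds.sub hlim

lemma colA (n : ℕ) : HasSum (fun m => Af m n) (1/((n:ℝ)+1)^2) := by
  have key : ∀ m, (Nat.factorial n : ℝ) * (Nat.factorial m : ℝ) /
      (((n:ℝ)+1) * (Nat.factorial (m+n+1) : ℝ)) -
      (Nat.factorial n : ℝ) * (Nat.factorial (m+1) : ℝ) /
      (((n:ℝ)+1) * (Nat.factorial (m+1+n+1) : ℝ)) = Af m n := by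
    intro m
    have e1 : (Nat.factorial (m+n+2) : ℝ) = ((m:ℝ)+(n:ℝ)+2) * (Nat.factorial (m+n+1) : ℝ) := by
      have h : m+n+2 = (m+n+1)+1 := by omega
      rw [h, Nat.factorial_succ]; push_cast; ring
    have e2 : (Nat.factorial (m+1) : ℝ) = ((m:ℝ)+1) * (Nat.factorial m : ℝ) := by
      rw [Nat.factorial_succ]; push_cast; ring
    have e3 : (Nat.factorial (m+1+n+1) : ℝ) = ((m:ℝ)+(n:ℝ)+2) * (Nat.factorial (m+n+1) : ℝ) := by
      have h : m+1+n+1 = (m+n+1)+1 := by omega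
      rw [h, Nat.factorial_succ]; push_cast; ring
    have p1 : (0:ℝ) < (Nat.factorial (m+n+1) : ℝ) := by positivity
    have p2 : (0:ℝ) < (n:ℝ)+1 := by positivity
    have p3 : (0:ℝ) < (m:ℝ)+(n:ℝ)+2 := by positivity
    unfold Af
    rw [e1, e2, e3]
    field_simp
    ring
  set g : ℕ → ℝ := fun m =>
    (Nat.factorial n : ℝ) * (Nat.factorial m : ℝ) / (((n:ℝ)+1) * (Nat.factorial (m+n+1) : ℝ))
    with hg
  have key' : ∀ m, g m - g (m+1) = Af m n := fun m => key m
  have nonneg : ∀ m, 0 ≤ g m - g (m+1) := fun m => by rw [key' m]; exact Af_nonneg m n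
  have hb : ∀ m, g m ≤ (Nat.factorial n : ℝ) * (1/((m:ℝ)+1)) := by
    intro m
    have h2 : (Nat.factorial (m+1) : ℕ) ≤ Nat.factorial (m+n+1) := Nat.factorial_le (by omega)
    have h3 : ((m:ℝ)+1) * (Nat.factorial m : ℝ) = (Nat.factorial (m+1) : ℝ) := by
      rw [Nat.factorial_succ]; push_cast; ring
    have hfac1 : (1:ℝ) ≤ (Nat.factorial (m+n+1) : ℝ) := by
      exact_mod_cast Nat.one_le_iff_ne_zero.mpr (Nat.factorial_ne_zero _)
    have h1 : ((m:ℝ)+1) * (Nat.factorial m : ℝ) ≤ ((n:ℝ)+1) * (Nat.factorial (m+n+1) : ℝ) := by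
      rw [h3]
      have h4 : (Nat.factorial (m+1) : ℝ) ≤ (Nat.factorial (m+n+1) : ℝ) := by exact_mod_cast h2
      nlinarith [Nat.cast_nonneg (α := ℝ) n]
    have : g m ≤ (Nat.factorial n : ℝ) * (Nat.factorial m : ℝ) / (((m:ℝ)+1) * (Nat.factorial m : ℝ)) := by
      rw [hg]
      exact div_le_div_of_nonneg_left (by positivity) (by positivity) h1
    calc g m ≤ (Nat.factorial n : ℝ) * (Nat.factorial m : ℝ) / (((m:ℝ)+1) * (Nat.factorial m : ℝ)) := this
      _ = (Nat.factorial n : ℝ) * (1/((m:ℝ)+1)) := by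
          rw [mul_div_mul_right _ _ (by positivity : (Nat.factorial m : ℝ) ≠ 0)]
          ring
  have gnn : ∀ m, 0 ≤ g m := fun m => by rw [hg]; positivity
  have hlim : Tendsto g atTop (𝓝 0) :=
    squeeze_zero gnn hb
      (by simpa using (tendsto_one_div_add_atTop_nhds_zero_nat).const_mul (Nat.factorial n : ℝ))
  have g0 : g 0 = 1/((n:ℝ)+1)^2 := by
    rw [hg]
    simp only [Nat.factorial_zero, Nat.cast_one, Nat.zero_add, zero_add]
    rw [Nat.factorial_succ]
    push_cast
    have hpos : (0:ℝ) < (Nat.factorial n : ℝ) := by positivity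
    field_simp
  have h := telescope_hasSum nonneg hlim
  rw [g0] at h
  exact HasSum.congr_fun h (fun m => (key' m).symm)

noncomputable def bf (m : ℕ) : ℝ :=
  (Nat.factorial m : ℝ)^2 / (Nat.factorial (2*m+2) : ℝ)

lemma bf_nonneg (m : ℕ) : 0 ≤ bf m := by unfold bf; positivity

lemma Af_diag (m : ℕ) : Af m m = bf m := by
  unfold Af bf
  have h : m+m+2 = 2*m+2 := by omega
  rw [h, sq]

lemma rowB (m : ℕ) : HasSum (fun j => Af m (m+1+j)) (bf m) := by
  set g : ℕ → ℝ := fun j =>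
    (Nat.factorial m : ℝ) * (Nat.factorial (m+1+j) : ℝ) /
      (((m:ℝ)+1) * (Nat.factorial (2*m+2+j) : ℝ)) with hg
  have key : ∀ j, g j - g (j+1) = Af m (m+1+j) := by
    intro j
    have e0 : m+(m+1+j)+2 = (2*m+2+j)+1 := by omega
    have e1 : (Nat.factorial ((2*m+2+j)+1) : ℝ)
        = (2*(m:ℝ)+3+(j:ℝ)) * (Nat.factorial (2*m+2+j) : ℝ) := by
      rw [Nat.factorial_succ]; push_cast; ring
    have e2 : (Nat.factorial (m+1+(j+1)) : ℝ)
        = ((m:ℝ)+2+(j:ℝ)) * (Nat.factorial (m+1+j) : ℝ) := by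
      have h : m+1+(j+1) = (m+1+j)+1 := by omega
      rw [h, Nat.factorial_succ]; push_cast; ring
    have e3 : 2*m+2+(j+1) = (2*m+2+j)+1 := by omega
    have p1 : (0:ℝ) < (Nat.factorial (2*m+2+j) : ℝ) := by positivity
    have p2 : (0:ℝ) < (m:ℝ)+1 := by positivity
    have p3 : (0:ℝ) < 2*(m:ℝ)+3+(j:ℝ) := by positivity
    unfold Af
    rw [hg]
    simp only [e0, e3, e1, e2]
    field_simp
    ring
  have nonneg : ∀ j, 0 ≤ g j - g (j+1) := fun j => by rw [key j]; exact Af_nonneg _ _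
  have hb : ∀ j, g j ≤ (Nat.factorial m : ℝ) * (1/((j:ℝ)+1)) := by
    intro j
    have h2 : Nat.factorial (m+2+j) ≤ Nat.factorial (2*m+2+j) := Nat.factorial_le (by omega)
    have h3 : ((j:ℝ)+1) * (Nat.factorial (m+1+j) : ℝ) ≤ (Nat.factorial (m+2+j) : ℝ) := by
      have h4 : (Nat.factorial (m+2+j) : ℝ) = ((m:ℝ)+2+(j:ℝ)) * (Nat.factorial (m+1+j) : ℝ) := by
        have h : m+2+j = (m+1+j)+1 := by omega
        rw [h, Nat.factorial_succ]; push_cast; ring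
      rw [h4]
      have : (0:ℝ) ≤ (Nat.factorial (m+1+j) : ℝ) := by positivity
      nlinarith [Nat.cast_nonneg (α := ℝ) m]
    have h1 : ((j:ℝ)+1) * (Nat.factorial (m+1+j) : ℝ)
        ≤ ((m:ℝ)+1) * (Nat.factorial (2*m+2+j) : ℝ) := by
      have h5 : (Nat.factorial (m+2+j) : ℝ) ≤ (Nat.factorial (2*m+2+j) : ℝ) := by
        exact_mod_cast h2
      have h6 : (Nat.factorial (2*m+2+j) : ℝ) ≤ ((m:ℝ)+1) * (Nat.factorial (2*m+2+j) : ℝ) := by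
        nlinarith [Nat.cast_nonneg (α := ℝ) m, (by positivity : (0:ℝ) < (Nat.factorial (2*m+2+j) : ℝ))]
      linarith
    have step : g j ≤ (Nat.factorial m : ℝ) * (Nat.factorial (m+1+j) : ℝ) /
        (((j:ℝ)+1) * (Nat.factorial (m+1+j) : ℝ)) := by
      rw [hg]
      exact div_le_div_of_nonneg_left (by positivity) (by positivity) h1
    calc g j ≤ _ := step
      _ = (Nat.factorial m : ℝ) * (1/((j:ℝ)+1)) := by
          rw [mul_div_mul_right _ _ (by positivity : (Nat.factorial (m+1+j) : ℝ) ≠ 0)]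
          ring
  have gnn : ∀ j, 0 ≤ g j := fun j => by rw [hg]; positivity
  have hlim : Tendsto g atTop (𝓝 0) :=
    squeeze_zero gnn hb
      (by simpa using (tendsto_one_div_add_atTop_nhds_zero_nat).const_mul (Nat.factorial m : ℝ))
  have g0 : g 0 = bf m := by
    rw [hg]
    unfold bf
    simp only [Nat.add_zero]
    have h4 : (Nat.factorial (m+1) : ℝ) = ((m:ℝ)+1) * (Nat.factorial m : ℝ) := by
      rw [Nat.factorial_succ]; push_cast; ring
    rw [h4]
    have : (0:ℝ) < (Nat.factorial (2*m+2) : ℝ) := by positivity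
    field_simp
  have h := telescope_hasSum nonneg hlim
  rw [g0] at h
  exact HasSum.congr_fun h (fun j => (key j).symm)




lemma summable_inv_sq : Summable (fun n : ℕ => 1/((n:ℝ)+1)^2) := by
  have h := (summable_nat_add_iff (f := fun n : ℕ => 1 / (n:ℝ)^2) 1).mpr
    (Real.summable_one_div_nat_pow.mpr one_lt_two)
  refine h.congr fun n => ?_
  push_cast
  ring

lemma summable_bf : Summable bf := by
  apply Summable.of_nonneg_of_le bf_nonneg _ summable_inv_sq
  intro m
  unfold bf
  have hd : Nat.factorial (m+1) * Nat.factorial (m+1) ∣ Nat.factorial (2*m+2) := by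
    have := Nat.factorial_mul_factorial_dvd_factorial_add (m+1) (m+1)
    have h : m+1+(m+1) = 2*m+2 := by omega
    rwa [h] at this
  have hle : ((Nat.factorial (m+1) : ℝ)) * (Nat.factorial (m+1) : ℝ)
      ≤ (Nat.factorial (2*m+2) : ℝ) := by
    exact_mod_cast Nat.le_of_dvd (Nat.factorial_pos _) hd
  have hfs : (Nat.factorial (m+1) : ℝ) = ((m:ℝ)+1) * (Nat.factorial m : ℝ) := by
    rw [Nat.factorial_succ]; push_cast; ring
  rw [div_le_div_iff₀ (by positivity) (by positivity)]
  calc (Nat.factorial m : ℝ)^2 * ((m:ℝ)+1)^2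
      = ((Nat.factorial (m+1) : ℝ)) * (Nat.factorial (m+1) : ℝ) := by rw [hfs]; ring
    _ ≤ (Nat.factorial (2*m+2) : ℝ) := hle
    _ = 1 * (Nat.factorial (2*m+2) : ℝ) := by ring

noncomputable def Bv : ℝ := ∑' m, bf m
noncomputable def Lv : ℝ := ∑' n : ℕ, 1/((n:ℝ)+1)^2

lemma ofReal_tsum_bf : ∑' m, ENNReal.ofReal (bf m) = ENNReal.ofReal Bv :=
  (ENNReal.ofReal_tsum_of_nonneg bf_nonneg summable_bf).symm

noncomputable def F : ℕ × ℕ → ℝ≥0∞ := fun p => ENNReal.ofReal (Af p.1 p.2)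

lemma step1 : ∑' p : ℕ × ℕ, F p = ENNReal.ofReal Lv := by
  rw [ENNReal.tsum_prod' (f := F), ENNReal.tsum_comm]
  have hcol : ∀ n : ℕ, ∑' m, F (m, n) = ENNReal.ofReal (1/((n:ℝ)+1)^2) := by
    intro n
    have := ENNReal.ofReal_tsum_of_nonneg (fun m => Af_nonneg m n) (colA n).summable
    rw [(colA n).tsum_eq] at this
    exact this.symm
  calc ∑' (n : ℕ) (m : ℕ), F (m, n) = ∑' n : ℕ, ENNReal.ofReal (1/((n:ℝ)+1)^2) :=
        tsum_congr hcol
    _ = ENNReal.ofReal Lv :=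
        (ENNReal.ofReal_tsum_of_nonneg (fun n => by positivity) summable_inv_sq).symm

lemma step2 : ∑' p : ℕ × ℕ, F p = ENNReal.ofReal Bv + ENNReal.ofReal Bv + ENNReal.ofReal Bv := by
  classical
  set D : ℕ × ℕ → ℝ≥0∞ := fun p => if p.1 = p.2 then F p else 0 with hD
  set U : ℕ × ℕ → ℝ≥0∞ := fun p => if p.1 < p.2 then F p else 0 with hU
  set Lo : ℕ × ℕ → ℝ≥0∞ := fun p => if p.2 < p.1 then F p else 0 with hLo
  have hsplit : ∀ p, F p = D p + U p + Lo p := by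
    intro p
    rcases lt_trichotomy p.1 p.2 with h | h | h
    · simp [hD, hU, hLo, h, ne_of_lt h, not_lt_of_gt h, lt_asymm h]
    · simp [hD, hU, hLo, h, lt_irrefl]
    · simp [hD, hU, hLo, h, (ne_of_lt h).symm, not_lt_of_gt h, lt_asymm h]
  have hDsum : ∑' p, D p = ENNReal.ofReal Bv := by
    have hinj : Function.Injective (fun m : ℕ => ((m, m) : ℕ × ℕ)) := by
      intro a b h; simpa using congrArg Prod.fst h
    have hsupp : Function.support D ⊆ Set.range (fun m : ℕ => ((m, m) : ℕ × ℕ)) := by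
      intro p hp
      by_cases h : p.1 = p.2
      · exact ⟨p.1, by simp [Prod.ext_iff, h]⟩
      · simp [hD, h] at hp
    rw [← hinj.tsum_eq hsupp]
    simp only [hD, if_pos rfl]
    calc ∑' m : ℕ, F (m, m) = ∑' m : ℕ, ENNReal.ofReal (bf m) := by
          refine tsum_congr fun m => ?_
          simp [F, Af_diag m]
      _ = ENNReal.ofReal Bv := ofReal_tsum_bf
  have hUval : ∑' q : ℕ × ℕ, U (q.1, q.1 + 1 + q.2) = ENNReal.ofReal Bv := by
    have : ∀ q : ℕ × ℕ, U (q.1, q.1 + 1 + q.2) = ENNReal.ofReal (Af q.1 (q.1+1+q.2)) := by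
      intro q
      simp only [hU, F]
      rw [if_pos (by omega)]
    rw [tsum_congr this, ENNReal.tsum_prod']
    calc ∑' (m : ℕ) (j : ℕ), ENNReal.ofReal (Af m (m+1+j))
        = ∑' m : ℕ, ENNReal.ofReal (bf m) := by
          refine tsum_congr fun m => ?_
          have := ENNReal.ofReal_tsum_of_nonneg (fun j => Af_nonneg m (m+1+j)) (rowB m).summable
          rw [(rowB m).tsum_eq] at this
          exact this.symm
      _ = ENNReal.ofReal Bv := ofReal_tsum_bf
  have hUsum : ∑' p, U p = ENNReal.ofReal Bv := by
    have hinj : Function.Injective (fun q : ℕ × ℕ => ((q.1, q.1 + 1 + q.2) : ℕ × ℕ)) := by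
      intro a b h
      have h1 := congrArg Prod.fst h
      have h2 := congrArg Prod.snd h
      simp only at h1 h2
      exact Prod.ext h1 (by omega)
    have hsupp : Function.support U ⊆ Set.range (fun q : ℕ × ℕ => ((q.1, q.1 + 1 + q.2) : ℕ × ℕ)) := by
      intro p hp
      by_cases h : p.1 < p.2
      · exact ⟨(p.1, p.2 - p.1 - 1), by simp [Prod.ext_iff]; omega⟩
      · simp [hU, h] at hp
    rw [← hinj.tsum_eq hsupp]
    exact hUval
  have hLoval : ∑' q : ℕ × ℕ, Lo (q.1 + 1 + q.2, q.1) = ENNReal.ofReal Bv := by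
    have : ∀ q : ℕ × ℕ, Lo (q.1 + 1 + q.2, q.1) = ENNReal.ofReal (Af q.1 (q.1+1+q.2)) := by
      intro q
      simp only [hLo, F]
      rw [if_pos (by omega)]
      rw [Af_symm]
    rw [tsum_congr this, ENNReal.tsum_prod']
    calc ∑' (m : ℕ) (j : ℕ), ENNReal.ofReal (Af m (m+1+j))
        = ∑' m : ℕ, ENNReal.ofReal (bf m) := by
          refine tsum_congr fun m => ?_
          have := ENNReal.ofReal_tsum_of_nonneg (fun j => Af_nonneg m (m+1+j)) (rowB m).summable
          rw [(rowB m).tsum_eq] at this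
          exact this.symm
      _ = ENNReal.ofReal Bv := ofReal_tsum_bf
  have hLosum : ∑' p, Lo p = ENNReal.ofReal Bv := by
    have hinj : Function.Injective (fun q : ℕ × ℕ => ((q.1 + 1 + q.2, q.1) : ℕ × ℕ)) := by
      intro a b h
      have h1 := congrArg Prod.fst h
      have h2 := congrArg Prod.snd h
      simp only at h1 h2
      exact Prod.ext h2 (by omega)
    have hsupp : Function.support Lo ⊆ Set.range (fun q : ℕ × ℕ => ((q.1 + 1 + q.2, q.1) : ℕ × ℕ)) := by
      intro p hp
      by_cases h : p.2 < p.1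
      · exact ⟨(p.2, p.1 - p.2 - 1), by simp [Prod.ext_iff]; omega⟩
      · simp [hLo, h] at hp
    rw [← hinj.tsum_eq hsupp]
    exact hLoval
  calc ∑' p, F p = ∑' p, (D p + U p + Lo p) := tsum_congr hsplit
    _ = ENNReal.ofReal Bv + ENNReal.ofReal Bv + ENNReal.ofReal Bv := by
        rw [ENNReal.tsum_add, ENNReal.tsum_add, hDsum, hUsum, hLosum]

lemma Lv_eq : Lv = 3 * Bv := by
  have hB : 0 ≤ Bv := tsum_nonneg bf_nonneg
  have hL : 0 ≤ Lv := tsum_nonneg (fun n => by positivity)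
  have h := step1.symm.trans step2
  rw [← ENNReal.ofReal_add hB hB, ← ENNReal.ofReal_add (by linarith) hB] at h
  rw [ENNReal.ofReal_eq_ofReal_iff hL (by linarith)] at h
  linarith

theorem basel_eq_three_series :
    ∑' k : ℕ+, (1 : ℝ) / (k : ℝ) ^ 2 =
      3 * ∑' k : ℕ+, ((Nat.factorial ((k : ℕ) - 1) : ℝ) ^ 2 /
        (Nat.factorial (2 * (k : ℕ)) : ℝ)) := by
  have hL : ∑' k : ℕ+, (1 : ℝ) / (k : ℝ) ^ 2 = Lv := by
    rw [← Equiv.tsum_eq Equiv.pnatEquivNat.symm (fun k : ℕ+ => (1 : ℝ) / (k : ℝ) ^ 2)]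
    unfold Lv
    refine tsum_congr fun n => ?_
    have h : ((Equiv.pnatEquivNat.symm n : ℕ+) : ℝ) = (n : ℝ) + 1 := by
      simp [Equiv.pnatEquivNat, Nat.succPNat]
    rw [h]
  have hR : ∑' k : ℕ+, ((Nat.factorial ((k : ℕ) - 1) : ℝ) ^ 2 /
      (Nat.factorial (2 * (k : ℕ)) : ℝ)) = Bv := by
    rw [← Equiv.tsum_eq Equiv.pnatEquivNat.symm (fun k : ℕ+ => ((Nat.factorial ((k : ℕ) - 1) : ℝ) ^ 2 /
      (Nat.factorial (2 * (k : ℕ)) : ℝ)))]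
    unfold Bv
    refine tsum_congr fun n => ?_
    have h : ((Equiv.pnatEquivNat.symm n : ℕ+) : ℕ) = n + 1 := by
      simp [Equiv.pnatEquivNat, Nat.succPNat]
    simp only [h]
    unfold bf
    have h1 : n + 1 - 1 = n := by omega
    have h2 : 2 * (n+1) = 2*n+2 := by omega
    rw [h1, h2]
  rw [hL, hR, Lv_eq]
end

section
/- Let 0 < h < 2 and set ω = (2/h)·arcsin(h/2). Then every solution x: ℝ → ℝ of x'' = -ω² x satisfies x(t+h) - 2x(t) + x(t-h) = -h² x(t) for all t (i.e., x'' = -ω² x is a modified equation for the Störmer–Verlet discretization of the harmonic oscillator). -/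
/-!
For fixed `t`, both `s ↦ x (t + s) + x (t - s)` and `s ↦ 2 cos (ω s) x t` solve `y'' = -ω² y` with
the same initial data `y 0 = 2 x t`, `y' 0 = 0`, so they agree (conservation of the energy
`ω² y² + y'²` of their difference). At `s = h` the choice `ω h = 2 arcsin (h / 2)` makes
`2 cos (ω h) = 2 - h²`, which is exactly the Störmer–Verlet recursion.
-/

open Real

theorem eq_zero_of_hasDerivAt_neg_mul {k : ℝ} (hk : 0 ≤ k) {f f' : ℝ → ℝ}
    (hf : ∀ t, HasDerivAt f (f' t) t) (hf' : ∀ t, HasDerivAt f' (-k * f t) t)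
    (hf0 : f 0 = 0) (hf'0 : f' 0 = 0) : f = 0 := by
  set E : ℝ → ℝ := fun t => k * f t ^ 2 + f' t ^ 2
  have hE : ∀ t, HasDerivAt E 0 t := fun t =>
    ((((hf t).pow 2).const_mul k).add ((hf' t).pow 2)).congr_deriv (by ring)
  have hE_zero (t : ℝ) : E t = 0 := by
    rw [is_const_of_deriv_eq_zero (fun s => (hE s).differentiableAt) (fun s => (hE s).deriv) t 0]
    simp [E, hf0, hf'0]
  have hf'_zero (t : ℝ) : f' t = 0 := by
    have := hE_zero t
    simp only [E] at this
    nlinarith [mul_nonneg hk (sq_nonneg (f t)), sq_nonneg (f' t)]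
  funext t
  rw [is_const_of_deriv_eq_zero (fun s => (hf s).differentiableAt)
    (fun s => (hf s).deriv.trans (hf'_zero s)) t 0, hf0, Pi.zero_apply]

theorem add_add_sub_eq_two_mul_cos_mul {ω : ℝ} {x x' : ℝ → ℝ}
    (hx : ∀ t, HasDerivAt x (x' t) t) (hx' : ∀ t, HasDerivAt x' (-ω ^ 2 * x t) t) (t s : ℝ) :
    x (t + s) + x (t - s) = 2 * cos (ω * s) * x t := by
  have hcos (s : ℝ) : HasDerivAt (fun s => cos (ω * s)) (-sin (ω * s) * ω) s :=
    ((hasDerivAt_id s).const_mul ω).cos.congr_deriv (by simp)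
  have hsin (s : ℝ) : HasDerivAt (fun s => sin (ω * s)) (cos (ω * s) * ω) s :=
    ((hasDerivAt_id s).const_mul ω).sin.congr_deriv (by simp)
  have hdiff := eq_zero_of_hasDerivAt_neg_mul (sq_nonneg ω)
    (f := fun s => x (t + s) + x (t - s) - 2 * cos (ω * s) * x t)
    (f' := fun s => x' (t + s) - x' (t - s) + 2 * ω * sin (ω * s) * x t)
    (fun s => ((((hx _).comp_const_add t s).add ((hx _).comp_const_sub t s)).sub
      (((hcos s).const_mul 2).mul_const (x t))).congr_deriv (by ring))
    (fun s => ((((hx' _).comp_const_add t s).sub ((hx' _).comp_const_sub t s)).add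
      (((hsin s).const_mul (2 * ω)).mul_const (x t))).congr_deriv (by ring))
    (by simp only [add_zero, sub_zero, mul_zero, cos_zero, mul_one]; ring) (by simp)
  exact sub_eq_zero.mp (congrFun hdiff s)

theorem Real.cos_two_mul_arcsin {y : ℝ} (hy₁ : -1 ≤ y) (hy₂ : y ≤ 1) :
    cos (2 * arcsin y) = 1 - 2 * y ^ 2 := by
  rw [cos_two_mul_eq_one_sub, sin_arcsin hy₁ hy₂]

theorem modified_equation (h : ℝ) (h0 : 0 < h) (h2 : h < 2) (x : ℝ → ℝ)
    (hx1 : Differentiable ℝ x) (hx2 : Differentiable ℝ (deriv x))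
    (hode : ∀ t : ℝ, deriv (deriv x) t = -((2 / h) * Real.arcsin (h / 2)) ^ 2 * x t) :
    ∀ t : ℝ, x (t + h) - 2 * x t + x (t - h) = -h ^ 2 * x t := by
  intro t
  set ω := (2 / h) * arcsin (h / 2)
  have hcos : cos (ω * h) = 1 - h ^ 2 / 2 := by
    have hωh : ω * h = 2 * arcsin (h / 2) := by simp only [ω]; field_simp
    rw [hωh, cos_two_mul_arcsin (by linarith) (by linarith)]
    ring
  have hsum := add_add_sub_eq_two_mul_cos_mul (fun u => (hx1 u).hasDerivAt)
    (fun u => hode u ▸ (hx2 u).hasDerivAt) t h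
  rw [hcos] at hsum
  linarith
end

section
/- For 0 < h < 2, (2/h · arcsin(h/2))² = ∑_{k=1}^∞ 2((k-1)!)²/(2k)! · h^{2k-2}; in particular the power series coefficients of the modified equation x'' = -∑_{k≥1} (2((k-1)!)²/(2k)!) h^{2k-2} x of the Störmer–Verlet scheme x_{j+1} - 2x_j + x_{j-1} = -h² x_j are f_{2k-2}(x) = -((k-1)!)²/(k(2k-1)!) · x. -/
/-!
Put `I m θ = ∫₀^θ (θ - t) sin^m t dt`. Taylor's formula with integral remainder, applied to
`sin^(m+2)` (whose second derivative is `(m+2)(m+1) sin^m - (m+2)² sin^(m+2)`), gives the reduction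
`(m+2)(m+1) I m - (m+2)² I (m+2) = sin^(m+2) θ`. Starting from `θ² = 2 I 0` and iterating expands
`θ²` as `∑ₖ aₖ sin^(2k+2) θ` with `aₖ = 2·4ᵏ (k!)² / (2k+2)!`, up to the remainder
`(2n+1)(2n+2) aₙ I (2n)`. Since `4ⁿ ≤ (2n+1) C(2n, n)` this remainder is `O(n sin^(2n) θ)`, so
it vanishes for `0 ≤ θ < π/2`. At `θ = arcsin (h/2)` this is the claimed series for
`(2/h · arcsin (h/2))²`.
-/

open Real intervalIntegral Finset Filter Topology
open scoped Nat Interval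

theorem integral_sub_mul_deriv_deriv {g g' g'' : ℝ → ℝ} {a b : ℝ}
    (hg : ∀ t ∈ [[a, b]], HasDerivAt g (g' t) t) (hg' : ∀ t ∈ [[a, b]], HasDerivAt g' (g'' t) t)
    (hg'' : IntervalIntegrable g'' MeasureTheory.volume a b) :
    ∫ t in a..b, (b - t) * g'' t = g b - g a - (b - a) * g' a := by
  have hsub : ∀ t ∈ [[a, b]], HasDerivAt (fun t => b - t) (-1) t := fun t _ =>
    by simpa using (hasDerivAt_id t).const_sub b
  have hg'_int : IntervalIntegrable g' MeasureTheory.volume a b :=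
    (HasDerivAt.continuousOn hg').intervalIntegrable
  rw [integral_mul_deriv_eq_deriv_mul hsub hg' intervalIntegrable_const hg'']
  simp only [neg_one_mul, intervalIntegral.integral_neg, integral_eq_sub_of_hasDerivAt hg hg'_int]
  ring

theorem hasDerivAt_sin_pow_succ (m : ℕ) (t : ℝ) :
    HasDerivAt (fun t => sin t ^ (m + 1)) ((m + 1) * sin t ^ m * cos t) t := by
  simpa using (hasDerivAt_sin t).fun_pow (m + 1)

theorem hasDerivAt_deriv_sin_pow_add_two (m : ℕ) (t : ℝ) :
    HasDerivAt (fun t => (m + 2) * (sin t ^ (m + 1) * cos t))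
      ((m + 2) * (m + 1) * sin t ^ m - (m + 2) ^ 2 * sin t ^ (m + 2)) t :=
  (((hasDerivAt_sin_pow_succ m t).fun_mul (hasDerivAt_cos t)).const_mul ((m : ℝ) + 2)).congr_deriv
    (by linear_combination ((m : ℝ) + 2) * (m + 1) * sin t ^ m * sin_sq_add_cos_sq t)

theorem integral_sub_mul_sin_pow_reduction (m : ℕ) (θ : ℝ) :
    (m + 2) * (m + 1) * (∫ t in (0 : ℝ)..θ, (θ - t) * sin t ^ m)
      - (m + 2) ^ 2 * (∫ t in (0 : ℝ)..θ, (θ - t) * sin t ^ (m + 2)) = sin θ ^ (m + 2) := by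
  have hint : ∀ n : ℕ, IntervalIntegrable (fun t => (θ - t) * sin t ^ n) MeasureTheory.volume 0 θ :=
    fun n => (by fun_prop : Continuous _).intervalIntegrable _ _
  have := integral_sub_mul_deriv_deriv (g := fun t => sin t ^ (m + 2)) (a := 0) (b := θ)
    (fun t _ => by convert hasDerivAt_sin_pow_succ (m + 1) t using 1; push_cast; ring)
    (fun t _ => hasDerivAt_deriv_sin_pow_add_two m t)
    ((by fun_prop : Continuous _).intervalIntegrable _ _)
  rw [← integral_const_mul, ← integral_const_mul, ← integral_sub ((hint m).const_mul _)
    ((hint (m + 2)).const_mul _)]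
  simpa [mul_sub, mul_left_comm] using this

noncomputable def arcsinSqCoeff (n : ℕ) : ℝ :=
  2 * 4 ^ n * (n ! : ℝ) ^ 2 / (2 * n + 2)!

theorem arcsinSqCoeff_nonneg (n : ℕ) : 0 ≤ arcsinSqCoeff n := by
  unfold arcsinSqCoeff; positivity

theorem arcsinSqCoeff_zero : arcsinSqCoeff 0 = 1 := by
  norm_num [arcsinSqCoeff]

theorem factorial_two_mul_add_two (n : ℕ) :
    ((2 * n + 2)! : ℝ) = (2 * n + 2) * (2 * n + 1) * (2 * n)! := by
  push_cast [Nat.factorial_succ]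
  ring

theorem arcsinSqCoeff_succ (n : ℕ) :
    (2 * n + 3) * (2 * n + 4) * arcsinSqCoeff (n + 1) = (2 * n + 2) ^ 2 * arcsinSqCoeff n := by
  rw [arcsinSqCoeff, arcsinSqCoeff, show 2 * (n + 1) + 2 = 2 * n + 2 + 1 + 1 by ring,
    Nat.factorial_succ (2 * n + 2 + 1), Nat.factorial_succ (2 * n + 2), Nat.factorial_succ n]
  push_cast
  field_simp
  ring

theorem two_mul_add_two_mul_arcsinSqCoeff_le (n : ℕ) : (2 * n + 2) * arcsinSqCoeff n ≤ 2 := by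
  have hfour : (4 : ℝ) ^ n ≤ (2 * n + 1) * (2 * n).choose n := by
    exact_mod_cast Nat.four_pow_le_two_mul_add_one_mul_central_binom n
  have hchoose : ((2 * n)! : ℝ) = (2 * n).choose n * n ! * n ! := by
    rw [two_mul]; exact_mod_cast (Nat.add_choose_mul_factorial_mul_factorial n n).symm
  rw [arcsinSqCoeff, factorial_two_mul_add_two, hchoose]
  have : (0 : ℝ) < (2 * n).choose n := by exact_mod_cast Nat.choose_pos (by omega)
  rw [mul_div_assoc', div_le_iff₀ (by positivity)]
  nlinarith [mul_le_mul_of_nonneg_right hfour (by positivity : (0 : ℝ) ≤ 2 * (2 * n + 2) * n ! ^ 2)]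

theorem sq_eq_sum_arcsinSqCoeff_mul_sin_pow_add_remainder (θ : ℝ) (n : ℕ) :
    θ ^ 2 = ∑ k ∈ range n, arcsinSqCoeff k * sin θ ^ (2 * k + 2)
      + (2 * n + 1) * (2 * n + 2) * arcsinSqCoeff n *
        ∫ t in (0 : ℝ)..θ, (θ - t) * sin t ^ (2 * n) := by
  induction n with
  | zero =>
    simp only [range_zero, sum_empty, mul_zero, pow_zero, mul_one, arcsinSqCoeff_zero,
      integral_sub intervalIntegrable_const intervalIntegrable_id, integral_const, integral_id]
    norm_num
    ring
  | succ n ih =>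
    have hred := integral_sub_mul_sin_pow_reduction (2 * n) θ
    have hcoeff := arcsinSqCoeff_succ n
    rw [sum_range_succ, ih, show 2 * (n + 1) = 2 * n + 2 by ring]
    push_cast at hred ⊢
    linear_combination arcsinSqCoeff n * hred
      - (∫ t in (0 : ℝ)..θ, (θ - t) * sin t ^ (2 * n + 2)) * hcoeff

theorem abs_integral_sub_mul_sin_pow_le {θ : ℝ} (h0 : 0 ≤ θ) (hπ : θ ≤ π / 2) (m : ℕ) :
    |∫ t in (0 : ℝ)..θ, (θ - t) * sin t ^ m| ≤ θ ^ 2 * sin θ ^ m := by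
  have hbound : ∀ t ∈ Ι 0 θ, ‖(θ - t) * sin t ^ m‖ ≤ θ * sin θ ^ m := by
    intro t ht
    rw [Set.uIoc_of_le h0] at ht
    have hsin : 0 ≤ sin t := sin_nonneg_of_nonneg_of_le_pi ht.1.le (by linarith [pi_pos, ht.2])
    rw [norm_mul, norm_pow, Real.norm_of_nonneg (by linarith [ht.2]), Real.norm_of_nonneg hsin]
    gcongr
    · linarith [ht.1]
    · exact sin_le_sin_of_le_of_le_pi_div_two (by linarith [ht.1]) hπ ht.2
  calc |∫ t in (0 : ℝ)..θ, (θ - t) * sin t ^ m| ≤ θ * sin θ ^ m * |θ - 0| :=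
        norm_integral_le_of_norm_le_const hbound
    _ = θ ^ 2 * sin θ ^ m := by rw [sub_zero, abs_of_nonneg h0]; ring

theorem tendsto_arcsinSqCoeff_remainder {θ : ℝ} (h0 : 0 ≤ θ) (hπ : θ < π / 2) :
    Tendsto (fun n : ℕ => (2 * n + 1) * (2 * n + 2) * arcsinSqCoeff n *
      ∫ t in (0 : ℝ)..θ, (θ - t) * sin t ^ (2 * n)) atTop (𝓝 0) := by
  set r := sin θ ^ 2
  have hr0 : 0 ≤ r := sq_nonneg _
  have hr1 : r < 1 := by
    have : sin θ < 1 := by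
      simpa using sin_lt_sin_of_lt_of_le_pi_div_two (by linarith [pi_pos]) le_rfl hπ
    nlinarith [sin_nonneg_of_nonneg_of_le_pi h0 (by linarith [pi_pos])]
  have hlim : Tendsto (fun n : ℕ => 2 * θ ^ 2 * (2 * (n * r ^ n) + r ^ n)) atTop (𝓝 0) := by
    simpa using ((tendsto_self_mul_const_pow_of_lt_one hr0 hr1).const_mul 2 |>.add
      (tendsto_pow_atTop_nhds_zero_of_lt_one hr0 hr1)).const_mul (2 * θ ^ 2)
  refine squeeze_zero_norm (fun n => ?_) hlim
  have hc := two_mul_add_two_mul_arcsinSqCoeff_le n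
  have hc0 := arcsinSqCoeff_nonneg n
  have hI := abs_integral_sub_mul_sin_pow_le h0 hπ.le (2 * n)
  rw [pow_mul] at hI
  rw [Real.norm_eq_abs, abs_mul, abs_of_nonneg (by positivity)]
  calc (2 * n + 1) * (2 * n + 2) * arcsinSqCoeff n * |∫ t in (0 : ℝ)..θ, (θ - t) * sin t ^ (2 * n)|
      ≤ (2 * n + 1) * 2 * (θ ^ 2 * r ^ n) := by
        rw [mul_assoc ((2 * n : ℝ) + 1)]
        gcongr
    _ = 2 * θ ^ 2 * (2 * (n * r ^ n) + r ^ n) := by ring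

theorem hasSum_arcsinSqCoeff_mul_sin_pow {θ : ℝ} (h0 : 0 ≤ θ) (hπ : θ < π / 2) :
    HasSum (fun n => arcsinSqCoeff n * sin θ ^ (2 * n + 2)) (θ ^ 2) := by
  have hsin : 0 ≤ sin θ := sin_nonneg_of_nonneg_of_le_pi h0 (by linarith [pi_pos])
  rw [hasSum_iff_tendsto_nat_of_nonneg (fun n => by have := arcsinSqCoeff_nonneg n; positivity)]
  have hpartial : ∀ n : ℕ, ∑ k ∈ range n, arcsinSqCoeff k * sin θ ^ (2 * k + 2) = θ ^ 2 -
      (2 * n + 1) * (2 * n + 2) * arcsinSqCoeff n * ∫ t in (0 : ℝ)..θ, (θ - t) * sin t ^ (2 * n) :=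
    fun n => eq_sub_of_add_eq (sq_eq_sum_arcsinSqCoeff_mul_sin_pow_add_remainder θ n).symm
  simp_rw [hpartial]
  simpa using tendsto_const_nhds.sub (tendsto_arcsinSqCoeff_remainder h0 hπ)

theorem hasSum_arcsinSqCoeff_mul_pow {x : ℝ} (hx : |x| < 1) :
    HasSum (fun n => arcsinSqCoeff n * x ^ (2 * n + 2)) (arcsin x ^ 2) := by
  have h := hasSum_arcsinSqCoeff_mul_sin_pow (arcsin_nonneg.2 (abs_nonneg x))
    (arcsin_lt_pi_div_two.2 hx)
  rw [sin_arcsin (by linarith [abs_nonneg x]) hx.le] at h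
  have hpow (n : ℕ) : |x| ^ (2 * n + 2) = x ^ (2 * n + 2) := Even.pow_abs ⟨n + 1, by ring⟩ x
  have harcsin : arcsin |x| ^ 2 = arcsin x ^ 2 := by
    rcases abs_choice x with hx' | hx' <;> simp [hx', arcsin_neg]
  simpa only [hpow, harcsin] using h

theorem two_mul_sq_factorial_pred_div_factorial_two_mul {k : ℕ} (hk : k ≠ 0) :
    2 * ((k - 1)! : ℝ) ^ 2 / (2 * k)! = ((k - 1)! : ℝ) ^ 2 / (k * (2 * k - 1)!) := by
  rw [← Nat.mul_factorial_pred (by omega : 2 * k ≠ 0)]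
  push_cast
  field_simp

theorem modified_equation_series (h : ℝ) (h0 : 0 < h) (h2 : h < 2) :
    ((2 / h) * Real.arcsin (h / 2)) ^ 2 =
      ∑' k : ℕ+, (2 * (Nat.factorial ((k : ℕ) - 1) : ℝ) ^ 2 /
        (Nat.factorial (2 * (k : ℕ)) : ℝ)) * h ^ (2 * (k : ℕ) - 2) ∧
    ∀ (k : ℕ+) (x : ℝ),
      -((Nat.factorial ((k : ℕ) - 1) : ℝ) ^ 2 /
          ((k : ℝ) * (Nat.factorial (2 * (k : ℕ) - 1) : ℝ))) * x =
      -(2 * (Nat.factorial ((k : ℕ) - 1) : ℝ) ^ 2 /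
          (Nat.factorial (2 * (k : ℕ)) : ℝ)) * x := by
  refine ⟨?_, fun k x => by rw [two_mul_sq_factorial_pred_div_factorial_two_mul k.ne_zero]⟩
  have hseries := (hasSum_arcsinSqCoeff_mul_pow (x := h / 2)
    (by rw [abs_of_pos (by positivity)]; linarith)).mul_left ((2 / h) ^ 2)
  rw [← mul_pow] at hseries
  refine (Equiv.pnatEquivNat.symm.hasSum_iff.1 (hseries.congr_fun fun n => ?_)).tsum_eq.symm
  have hh : h ≠ 0 := h0.ne'
  simp only [Function.comp_apply, Equiv.pnatEquivNat_symm_apply, Nat.succPNat_coe,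
    Nat.succ_sub_one, arcsinSqCoeff, show 2 * n.succ = 2 * n + 2 by omega, Nat.add_sub_cancel,
    div_pow, pow_add, pow_mul]
  field_simp
  ring
end

section
/- For positive integers k and l with l ≤ k, define r_{k,l} = l!/(k²(k+1)(k+2)⋯(k+l)). Then 1/k² = ∑_{l=1}^{k} (l-1)!/(k(k+1)⋯(k+l)) + r_{k,k}. -/
/-!
The remainder `r n = n! / (x² (x+1)⋯(x+n))` telescopes: since `(x + n + 1) - (n + 1) = x`,
`r n - r (n+1) = n! / (x (x+1)⋯(x+n+1))`, which is the `(n+1)`-st summand. Summing from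
`r 0 = 1 / x²` gives the expansion.
-/

open Finset Nat

namespace InvSqExpansion

theorem prod_range_succ_add_eq_mul_prod_Icc {R : Type*} [CommSemiring R] (x : R) (l : ℕ) :
    ∏ m ∈ range (l + 1), (x + m) = x * ∏ m ∈ Icc 1 l, (x + m) := by
  induction l with
  | zero => simp
  | succ n ih =>
    rw [prod_range_succ, ih, prod_Icc_succ_top (Nat.le_add_left 1 n)]
    ring

variable {K : Type*} [Field K]

noncomputable def remainder (x : K) (n : ℕ) : K :=
  n ! / (x ^ 2 * ∏ m ∈ Icc 1 n, (x + m))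

theorem remainder_eq_add_remainder_succ {x : K} (hx : ∀ m : ℕ, x + m ≠ 0) (n : ℕ) :
    remainder x n = n ! / ∏ m ∈ range (n + 2), (x + m) + remainder x (n + 1) := by
  have hx0 : x ≠ 0 := by simpa using hx 0
  have hP : ∏ m ∈ Icc 1 n, (x + m) ≠ 0 := prod_ne_zero_iff.mpr fun m _ => hx m
  have hxn : x + (n + 1 : ℕ) ≠ 0 := hx (n + 1)
  push_cast at hxn
  rw [remainder, remainder, prod_range_succ_add_eq_mul_prod_Icc,
    prod_Icc_succ_top (Nat.le_add_left 1 n), factorial_succ]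
  push_cast
  field_simp

theorem inv_sq_eq_sum_add_remainder {x : K} (hx : ∀ m : ℕ, x + m ≠ 0) (n : ℕ) :
    1 / x ^ 2 =
      (∑ l ∈ Icc 1 n, ((l - 1)! : K) / ∏ m ∈ range (l + 1), (x + m)) + remainder x n := by
  induction n with
  | zero => simp [remainder]
  | succ n ih =>
    rw [sum_Icc_succ_top (Nat.le_add_left 1 n), ih, remainder_eq_add_remainder_succ hx,
      Nat.add_sub_cancel]
    ring

end InvSqExpansion

theorem inv_sq_expansion (k : ℕ) (hk : 0 < k) :
    (1 : ℝ) / (k : ℝ) ^ 2 =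
      (∑ l ∈ Finset.Icc 1 k,
        (Nat.factorial (l - 1) : ℝ) / ∏ m ∈ Finset.range (l + 1), ((k : ℝ) + m)) +
      (Nat.factorial k : ℝ) / ((k : ℝ) ^ 2 * ∏ m ∈ Finset.Icc 1 k, ((k : ℝ) + m)) := by
  have hk_add : ∀ m : ℕ, (k : ℝ) + m ≠ 0 := fun m => by positivity
  exact InvSqExpansion.inv_sq_eq_sum_add_remainder hk_add k
end
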